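/- Let G be a countable discrete abelian group acting by multiplication by characters on H = L²(E₀) and K = L²(F₀), with Bessel vectors v ∈ H and w ∈ K (essentially bounded functions). Let E = supp(v) and F = supp(w). If λ(E \ F) > 0, then the range of Θ_v is not contained in the range of Θ_w in ℓ²(G). In particular, if λ(E Δ F) > 0 the ranges differ. -/

import Mathlib

/-!
Suppose the range of `Θ_v` on `L²(E₀)` lies in that of `Θ_w` on `L²(F₀)`, and test it on the
indicator `h` of `S = {v ≠ 0} \ {w ≠ 0}`: some `h' ∈ L²(F₀)` has `Θ_v h = Θ_w h'`, i.e. every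
Fourier coefficient of `h v̄ - h' w̄` vanishes. Since the characters are complete, `h v̄ = h' w̄`
almost everywhere; on `S` the right side is `0` (as `w = 0` there) while the left side is `v̄ ≠ 0`.
Hence `λ(S) = 0`. Boundedness of `w` is what puts `h' w̄` in `L²`. A symmetric difference of
positive measure has one of its two halves of positive measure.
-/

open MeasureTheory ComplexConjugate

section

variable {G X : Type*} [MeasurableSpace X]

-- The range of `Θ_v` on `L²(E)`, elements of `L²(E)` being represented by functions vanishing off `E`.
def analysisRange (μ : Measure X) (χ : G → X → ℂ) (E : Set X) (v : X → ℂ) : Set (G → ℂ) :=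
  {a | ∃ h : X → ℂ, MemLp h 2 μ ∧ (∀ᵐ t ∂μ, t ∉ E → h t = 0) ∧
    a = fun g => ∫ t, h t * conj (χ g t * v t) ∂μ}

variable {μ : Measure X}

lemma memLp_mul_conj_of_ae_norm_le {p : ENNReal} {f φ : X → ℂ} {C : ℝ} (hf : MemLp f p μ)
    (hφ : AEStronglyMeasurable φ μ) (hC : ∀ᵐ t ∂μ, ‖φ t‖ ≤ C) :
    MemLp (fun t => f t * conj (φ t)) p μ :=
  (memLp_top_of_bound (Complex.continuous_conj.comp_aestronglyMeasurable hφ) C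
    (by simpa using hC)).mul' hf

lemma measure_diff_pos_or_of_measure_symmDiff_pos {s t : Set X} (h : 0 < μ (symmDiff s t)) :
    0 < μ (s \ t) ∨ 0 < μ (t \ s) := by
  by_contra! hc
  simp only [nonpos_iff_eq_zero] at hc
  exact h.ne' (measure_union_null hc.1 hc.2)

variable [IsFiniteMeasure μ] {χ : G → X → ℂ}

lemma integrable_mul_conj_character (hmeas : ∀ g, Measurable (χ g)) (hunit : ∀ g x, ‖χ g x‖ = 1)
    {f : X → ℂ} (hf : MemLp f 2 μ) (g : G) :
    Integrable (fun x => f x * conj (χ g x)) μ :=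
  (memLp_mul_conj_of_ae_norm_le hf (hmeas g).aestronglyMeasurable
    (.of_forall fun x => (hunit g x).le)).integrable one_le_two

lemma ae_eq_of_forall_integral_mul_conj_character_eq (hmeas : ∀ g, Measurable (χ g))
    (hunit : ∀ g x, ‖χ g x‖ = 1)
    (hcomp : ∀ f : X → ℂ, MemLp f 2 μ → (∀ g, ∫ x, f x * conj (χ g x) ∂μ = 0) → f =ᵐ[μ] 0)
    {f₁ f₂ : X → ℂ} (hf₁ : MemLp f₁ 2 μ) (hf₂ : MemLp f₂ 2 μ)
    (heq : ∀ g, ∫ x, f₁ x * conj (χ g x) ∂μ = ∫ x, f₂ x * conj (χ g x) ∂μ) : f₁ =ᵐ[μ] f₂ := by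
  have hzero : f₁ - f₂ =ᵐ[μ] 0 := hcomp _ (hf₁.sub hf₂) fun g => by
    simp only [Pi.sub_apply, sub_mul]
    rw [integral_sub (integrable_mul_conj_character hmeas hunit hf₁ g)
      (integrable_mul_conj_character hmeas hunit hf₂ g), heq g, sub_self]
  filter_upwards [hzero] with x hx
  exact sub_eq_zero.mp hx

lemma analysisRange_not_subset (hmeas : ∀ g, Measurable (χ g)) (hunit : ∀ g x, ‖χ g x‖ = 1)
    (hcomp : ∀ f : X → ℂ, MemLp f 2 μ → (∀ g, ∫ x, f x * conj (χ g x) ∂μ = 0) → f =ᵐ[μ] 0)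
    {E F : Set X} {v w : X → ℂ} (hv : MemLp v 2 μ) (hw : AEStronglyMeasurable w μ)
    (hvE : ∀ᵐ t ∂μ, t ∉ E → v t = 0) (hwB : ∃ C : ℝ, ∀ᵐ t ∂μ, ‖w t‖ ≤ C)
    (hpos : 0 < μ ({t | v t ≠ 0} \ {t | w t ≠ 0})) :
    ¬ analysisRange μ χ E v ⊆ analysisRange μ χ F w := by
  intro hsub
  obtain ⟨C, hC⟩ := hwB
  set S := {t | v t ≠ 0} \ {t | w t ≠ 0}
  have hS : NullMeasurableSet S μ :=
    (hv.1.aemeasurable.nullMeasurableSet_preimage (measurableSet_singleton 0).compl).diff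
      (hw.aemeasurable.nullMeasurableSet_preimage (measurableSet_singleton 0).compl)
  set h : X → ℂ := S.indicator 1
  have hh_top : MemLp h ⊤ μ :=
    memLp_top_of_bound (aestronglyMeasurable_const.indicator₀ hS) 1
      (.of_forall fun t => (norm_indicator_le_norm_self _ t).trans (by simp))
  have hhE : ∀ᵐ t ∂μ, t ∉ E → h t = 0 := by
    filter_upwards [hvE] with t hvt htE
    exact Set.indicator_of_notMem (fun hts => hts.1 (hvt htE)) _
  obtain ⟨h', hh', -, hcoef⟩ := hsub ⟨h, hh_top.mono_exponent le_top, hhE, rfl⟩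
  have hrearrange : ∀ a b c : ℂ, a * conj b * conj c = a * conj (c * b) := fun a b c => by
    rw [map_mul]; ring
  have hkey : (fun t => h t * conj (v t)) =ᵐ[μ] fun t => h' t * conj (w t) :=
    ae_eq_of_forall_integral_mul_conj_character_eq hmeas hunit hcomp
      (hv.star.mul' hh_top) (memLp_mul_conj_of_ae_norm_le hh' hw hC) fun g => by
        simpa only [hrearrange] using congrFun hcoef g
  have hS0 : μ S = 0 := by
    refine measure_eq_zero_iff_ae_notMem.mpr ?_
    filter_upwards [hkey] with t ht hts
    rw [show h t = 1 from Set.indicator_of_mem hts _, not_not.mp hts.2, map_zero, mul_zero] at ht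
    exact hts.1 (by simpa using ht)
  exact hpos.ne' hS0

end

theorem stmt8_general {G X : Type*} [MeasurableSpace X]
    (μ : Measure X) [IsProbabilityMeasure μ]
    (χ : G → X → ℂ)
    (hmeas : ∀ g, Measurable (χ g))
    (hunit : ∀ g x, ‖χ g x‖ = 1)
    (hcomp : ∀ f : X → ℂ, MemLp f 2 μ →
      (∀ g : G, ∫ x, f x * conj (χ g x) ∂μ = 0) → f =ᵐ[μ] 0)
    (E₀ F₀ : Set X)
    (v w : X → ℂ) (hv : MemLp v 2 μ) (hw : MemLp w 2 μ)
    (hvsupp : ∀ᵐ t ∂μ, t ∉ E₀ → v t = 0) (hwsupp : ∀ᵐ t ∂μ, t ∉ F₀ → w t = 0)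
    -- v and w are Bessel vectors: essentially bounded
    (hvB : ∃ C : ℝ, ∀ᵐ t ∂μ, ‖v t‖ ≤ C) (hwB : ∃ C : ℝ, ∀ᵐ t ∂μ, ‖w t‖ ≤ C) :
    (0 < μ ({t | v t ≠ 0} \ {t | w t ≠ 0}) →
      ¬ ({a : G → ℂ | ∃ h : X → ℂ, MemLp h 2 μ ∧ (∀ᵐ t ∂μ, t ∉ E₀ → h t = 0) ∧
            a = fun g => ∫ t, h t * conj (χ g t * v t) ∂μ} ⊆
          {a : G → ℂ | ∃ h : X → ℂ, MemLp h 2 μ ∧ (∀ᵐ t ∂μ, t ∉ F₀ → h t = 0) ∧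
            a = fun g => ∫ t, h t * conj (χ g t * w t) ∂μ}))
    ∧
    (0 < μ (symmDiff {t | v t ≠ 0} {t | w t ≠ 0}) →
      {a : G → ℂ | ∃ h : X → ℂ, MemLp h 2 μ ∧ (∀ᵐ t ∂μ, t ∉ E₀ → h t = 0) ∧
          a = fun g => ∫ t, h t * conj (χ g t * v t) ∂μ} ≠
        {a : G → ℂ | ∃ h : X → ℂ, MemLp h 2 μ ∧ (∀ᵐ t ∂μ, t ∉ F₀ → h t = 0) ∧
          a = fun g => ∫ t, h t * conj (χ g t * w t) ∂μ}) := by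
  have hvw := analysisRange_not_subset hmeas hunit hcomp hv hw.1 hvsupp hwB (F := F₀)
  have hwv := analysisRange_not_subset hmeas hunit hcomp hw hv.1 hwsupp hvB (F := E₀)
  refine ⟨hvw, fun hpos heq => ?_⟩
  rcases measure_diff_pos_or_of_measure_symmDiff_pos hpos with hpos | hpos
  · exact hvw hpos heq.subset
  · exact hwv hpos heq.symm.subset

/-- For Bessel vectors `v ∈ L²(E₀)`, `w ∈ L²(F₀)` (essentially bounded
functions) with supports `E = supp v`, `F = supp w`: if `λ(E \ F) > 0` then the range of
`Θ_v` is not contained in the range of `Θ_w`; in particular if `λ(E Δ F) > 0` the ranges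
differ. -/
theorem stmt8 {G X : Type*} [CommGroup G] [Countable G] [DecidableEq G] [MeasurableSpace X]
    (μ : Measure X) [IsProbabilityMeasure μ]
    (χ : G → X → ℂ)
    (hmeas : ∀ g, Measurable (χ g))
    (hunit : ∀ g x, ‖χ g x‖ = 1)
    (hhom : ∀ g g' x, χ (g * g') x = χ g x * χ g' x)
    (horth : ∀ g g' : G, ∫ x, χ g x * conj (χ g' x) ∂μ = if g = g' then (1 : ℂ) else 0)
    (hcomp : ∀ f : X → ℂ, MemLp f 2 μ →
      (∀ g : G, ∫ x, f x * conj (χ g x) ∂μ = 0) → f =ᵐ[μ] 0)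
    (E₀ F₀ : Set X) (hE₀ : MeasurableSet E₀) (hF₀ : MeasurableSet F₀)
    (v w : X → ℂ) (hv : MemLp v 2 μ) (hw : MemLp w 2 μ)
    (hvsupp : ∀ᵐ t ∂μ, t ∉ E₀ → v t = 0) (hwsupp : ∀ᵐ t ∂μ, t ∉ F₀ → w t = 0)
    -- v and w are Bessel vectors: essentially bounded
    (hvB : ∃ C : ℝ, ∀ᵐ t ∂μ, ‖v t‖ ≤ C) (hwB : ∃ C : ℝ, ∀ᵐ t ∂μ, ‖w t‖ ≤ C) :
    (0 < μ ({t | v t ≠ 0} \ {t | w t ≠ 0}) →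
      ¬ ({a : G → ℂ | ∃ h : X → ℂ, MemLp h 2 μ ∧ (∀ᵐ t ∂μ, t ∉ E₀ → h t = 0) ∧
            a = fun g => ∫ t, h t * conj (χ g t * v t) ∂μ} ⊆
          {a : G → ℂ | ∃ h : X → ℂ, MemLp h 2 μ ∧ (∀ᵐ t ∂μ, t ∉ F₀ → h t = 0) ∧
            a = fun g => ∫ t, h t * conj (χ g t * w t) ∂μ}))
    ∧
    (0 < μ (symmDiff {t | v t ≠ 0} {t | w t ≠ 0}) →
      {a : G → ℂ | ∃ h : X → ℂ, MemLp h 2 μ ∧ (∀ᵐ t ∂μ, t ∉ E₀ → h t = 0) ∧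
          a = fun g => ∫ t, h t * conj (χ g t * v t) ∂μ} ≠
        {a : G → ℂ | ∃ h : X → ℂ, MemLp h 2 μ ∧ (∀ᵐ t ∂μ, t ∉ F₀ → h t = 0) ∧
          a = fun g => ∫ t, h t * conj (χ g t * w t) ∂μ}) :=
  stmt8_general μ χ hmeas hunit hcomp E₀ F₀ v w hv hw hvsupp hwsupp hvB hwB
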